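/- arXiv:2310.06383 — 3 statements merged into one kernel-verified Lean document; each statement's English description precedes it below -/
import Mathlib

section
/- For discrete random variables X, Z and finite-valued Y, the Bayes classification error P_e := E_{x,z}[1 - max_y P(Y=y|x,z)] satisfies P_e ≤ 1 - exp(-H(Y|X,Z)). -/
open Finset

/-- Shannon entropy (natural log) of a finitely supported distribution. -/
noncomputable def entropy {ι : Type*} [Fintype ι] (q : ι → ℝ) : ℝ :=
  ∑ i, Real.negMulLog (q i)

variable {𝓧 𝓩 𝓨 : Type*} [Fintype 𝓧] [Fintype 𝓩] [Fintype 𝓨]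

/-- Marginal distribution of (X, Z). -/
noncomputable def mXZ (p : 𝓧 × 𝓩 × 𝓨 → ℝ) : 𝓧 × 𝓩 → ℝ :=
  fun xz => ∑ y, p (xz.1, xz.2, y)

/-- Marginal distribution of X. -/
noncomputable def mX (p : 𝓧 × 𝓩 × 𝓨 → ℝ) : 𝓧 → ℝ :=
  fun x => ∑ z, ∑ y, p (x, z, y)

/-- Marginal distribution of Y. -/
noncomputable def mY (p : 𝓧 × 𝓩 × 𝓨 → ℝ) : 𝓨 → ℝ :=
  fun y => ∑ x, ∑ z, p (x, z, y)

/-- Marginal distribution of (X, Y). -/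
noncomputable def mXY (p : 𝓧 × 𝓩 × 𝓨 → ℝ) : 𝓧 × 𝓨 → ℝ :=
  fun xy => ∑ z, p (xy.1, z, xy.2)

/-- Conditional entropy H(Y|X,Z) = H(X,Z,Y) - H(X,Z). -/
noncomputable def condEntYXZ (p : 𝓧 × 𝓩 × 𝓨 → ℝ) : ℝ :=
  entropy p - entropy (mXZ p)

/-- Conditional entropy H(Y|X) = H(X,Y) - H(X). -/
noncomputable def condEntYX (p : 𝓧 × 𝓩 × 𝓨 → ℝ) : ℝ :=
  entropy (mXY p) - entropy (mX p)

/-- Mutual information I(Y;X) = H(Y) + H(X) - H(X,Y). -/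
noncomputable def miYX (p : 𝓧 × 𝓩 × 𝓨 → ℝ) : ℝ :=
  entropy (mY p) + entropy (mX p) - entropy (mXY p)

/-- Mutual information I(Y;(X,Z)) = H(Y) + H(X,Z) - H(X,Z,Y). -/
noncomputable def miYXZ (p : 𝓧 × 𝓩 × 𝓨 → ℝ) : ℝ :=
  entropy (mY p) + entropy (mXZ p) - entropy p

/-- Conditional mutual information I(Z;Y|X) := I(Y;(X,Z)) - I(Y;X). -/
noncomputable def cmi (p : 𝓧 × 𝓩 × 𝓨 → ℝ) : ℝ :=
  miYXZ p - miYX p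

/-- Bayes classification error with both modalities:
`E_{x,z}[1 - max_y P(Y=y|x,z)] = 1 - ∑_{x,z} max_y p(x,z,y)`. -/
noncomputable def bayesError [Nonempty 𝓨] (p : 𝓧 × 𝓩 × 𝓨 → ℝ) : ℝ :=
  1 - ∑ x, ∑ z, Finset.univ.sup' Finset.univ_nonempty (fun y => p (x, z, y))

/-- Missing-modality Bayes error: `E_x[1 - max_y P(Y=y|x)] = 1 - ∑_x max_y p_{X,Y}(x,y)`. -/
noncomputable def bayesErrorMiss [Nonempty 𝓨] (p : 𝓧 × 𝓩 × 𝓨 → ℝ) : ℝ :=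
  1 - ∑ x, Finset.univ.sup' Finset.univ_nonempty (fun y => mXY p (x, y))

/-- Upper bound for the Bayes classification error:
P_e ≤ 1 - exp(-H(Y|X,Z)). -/
theorem bayesError_le [Nonempty 𝓨]
    (p : 𝓧 × 𝓩 × 𝓨 → ℝ) (hp : ∀ a, 0 ≤ p a) (hsum : ∑ a, p a = 1) :
    bayesError p ≤ 1 - Real.exp (-condEntYXZ p) := by
  classical
  -- notation
  set s : 𝓧 → 𝓩 → ℝ := fun x z => Finset.univ.sup' Finset.univ_nonempty (fun y => p (x, z, y)) with hs
  set m : 𝓧 → 𝓩 → ℝ := fun x z => ∑ y, p (x, z, y) with hm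
  have hp_le_s : ∀ x z y, p (x, z, y) ≤ s x z := fun x z y =>
    Finset.le_sup' (fun y => p (x, z, y)) (Finset.mem_univ y)
  have hs0 : ∀ x z, 0 ≤ s x z := fun x z =>
    le_trans (hp ((x, z, Classical.arbitrary 𝓨))) (hp_le_s x z _)
  have hm0 : ∀ x z, 0 ≤ m x z := fun x z => Finset.sum_nonneg fun y _ => hp _
  have hms : ∀ x z, 0 < m x z → 0 < s x z := by
    intro x z hmx
    by_contra h
    push_neg at h
    have : m x z ≤ 0 := by
      apply Finset.sum_nonpos
      intro y _
      exact le_trans (hp_le_s x z y) h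
    linarith
  have hmsum : ∑ x, ∑ z, m x z = 1 := by
    rw [← hsum, Fintype.sum_prod_type]
    simp [hm, Fintype.sum_prod_type]
  set S : ℝ := ∑ x, ∑ z, s x z with hS
  have hS0 : 0 < S := by
    have hcard : (0:ℝ) < (Fintype.card 𝓨 : ℝ) := by
      exact_mod_cast Fintype.card_pos
    have h1 : (1:ℝ) ≤ (Fintype.card 𝓨 : ℝ) * S := by
      rw [← hmsum, hS, Finset.mul_sum]
      apply Finset.sum_le_sum
      intro x _
      rw [Finset.mul_sum]
      apply Finset.sum_le_sum
      intro z _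
      calc m x z = ∑ y : 𝓨, p (x, z, y) := rfl
        _ ≤ ∑ _y : 𝓨, s x z := Finset.sum_le_sum fun y _ => hp_le_s x z y
        _ = (Fintype.card 𝓨 : ℝ) * s x z := by
            rw [Finset.sum_const, Finset.card_univ, nsmul_eq_mul]
    nlinarith
  -- Step A: condEntYXZ ≥ ∑ m (log m - log s)
  have stepA : ∑ x, ∑ z, m x z * (Real.log (m x z) - Real.log (s x z)) ≤ condEntYXZ p := by
    have hrw : condEntYXZ p
        = ∑ x, ∑ z, ((∑ y, Real.negMulLog (p (x, z, y))) - Real.negMulLog (m x z)) := by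
      unfold condEntYXZ entropy mXZ
      rw [Fintype.sum_prod_type, Fintype.sum_prod_type, ← Finset.sum_sub_distrib]
      congr 1
      ext x
      rw [Fintype.sum_prod_type, ← Finset.sum_sub_distrib]
    rw [hrw]
    apply Finset.sum_le_sum
    intro x _
    apply Finset.sum_le_sum
    intro z _
    have key : ∑ y, p (x, z, y) * Real.log (p (x, z, y)) ≤ m x z * Real.log (s x z) := by
      have hmexp : m x z * Real.log (s x z) = ∑ y, p (x, z, y) * Real.log (s x z) := by
        rw [← Finset.sum_mul]
      rw [hmexp]
      apply Finset.sum_le_sum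
      intro y _
      rcases eq_or_lt_of_le (hp (x, z, y)) with h0 | h0
      · simp [← h0]
      · have hsy : 0 < s x z := lt_of_lt_of_le h0 (hp_le_s x z y)
        exact mul_le_mul_of_nonneg_left
          (Real.log_le_log (by linarith) (hp_le_s x z y)) (le_of_lt h0)
    have e1 : ∑ y, Real.negMulLog (p (x, z, y))
        = -∑ y, p (x, z, y) * Real.log (p (x, z, y)) := by
      simp [Real.negMulLog, Finset.sum_neg_distrib]
    have e2 : Real.negMulLog (m x z) = -(m x z * Real.log (m x z)) := by
      simp [Real.negMulLog]
    rw [e1, e2]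
    nlinarith [key]
  -- Step B: ∑ m (log m - log s) ≥ -log S
  have stepB : -Real.log S ≤ ∑ x, ∑ z, m x z * (Real.log (m x z) - Real.log (s x z)) := by
    have hterm : ∀ x z,
        m x z * (Real.log (s x z) - Real.log (m x z) - Real.log S) ≤ s x z / S - m x z := by
      intro x z
      rcases eq_or_lt_of_le (hm0 x z) with h0 | h0
      · rw [← h0, zero_mul, sub_zero]
        exact div_nonneg (hs0 x z) hS0.le
      · have hsx : 0 < s x z := hms x z h0
        have hlog : Real.log (s x z / (m x z * S)) ≤ s x z / (m x z * S) - 1 :=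
          Real.log_le_sub_one_of_pos (by positivity)
        have heq : Real.log (s x z / (m x z * S))
            = Real.log (s x z) - Real.log (m x z) - Real.log S := by
          rw [Real.log_div (ne_of_gt hsx) (by positivity), Real.log_mul (ne_of_gt h0) (ne_of_gt hS0)]
          ring
        rw [← heq]
        have := mul_le_mul_of_nonneg_left hlog (le_of_lt h0)
        calc m x z * Real.log (s x z / (m x z * S))
            ≤ m x z * (s x z / (m x z * S) - 1) := this
          _ = s x z / S - m x z := by
              field_simp
    have hsum2 : ∑ x, ∑ z, m x z * (Real.log (s x z) - Real.log (m x z) - Real.log S) ≤ 0 := by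
      calc ∑ x, ∑ z, m x z * (Real.log (s x z) - Real.log (m x z) - Real.log S)
          ≤ ∑ x, ∑ z, (s x z / S - m x z) :=
            Finset.sum_le_sum fun x _ => Finset.sum_le_sum fun z _ => hterm x z
        _ = 0 := by
            simp only [div_eq_mul_inv, Finset.sum_sub_distrib, ← Finset.sum_mul]
            rw [← hS, hmsum, mul_inv_cancel₀ (ne_of_gt hS0)]
            ring
    have hexp : ∑ x, ∑ z, m x z * (Real.log (s x z) - Real.log (m x z) - Real.log S)
        = (∑ x, ∑ z, m x z * (Real.log (s x z) - Real.log (m x z)))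
          - (∑ x, ∑ z, m x z) * Real.log S := by
      rw [Finset.sum_mul]
      rw [← Finset.sum_sub_distrib]
      congr 1
      ext x
      rw [Finset.sum_mul, ← Finset.sum_sub_distrib]
      congr 1
      ext z
      ring
    rw [hexp, hmsum, one_mul] at hsum2
    have : ∑ x, ∑ z, m x z * (Real.log (m x z) - Real.log (s x z))
        = -(∑ x, ∑ z, m x z * (Real.log (s x z) - Real.log (m x z))) := by
      rw [← Finset.sum_neg_distrib]
      congr 1; ext x
      rw [← Finset.sum_neg_distrib]
      congr 1; ext z
      ring
    rw [this]
    linarith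
  have hfinal : -condEntYXZ p ≤ Real.log S := by linarith
  have : Real.exp (-condEntYXZ p) ≤ S := by
    calc Real.exp (-condEntYXZ p) ≤ Real.exp (Real.log S) := Real.exp_le_exp.mpr hfinal
      _ = S := Real.exp_log hS0
  unfold bayesError
  linarith
end

section
/- If X, Z, Y are discrete random variables with I(Z;Y|X) > log|𝒴|·(1 - exp(-H(Y|X,Z))) + log 2 - H(Y|X,Z), then the lower bound of the missing-modality Bayes error strictly exceeds the upper bound of the full-modality Bayes error; in particular P_e^Miss > P_e. -/
open Finset

variable {𝓧 𝓩 𝓨 : Type*} [Fintype 𝓧] [Fintype 𝓩] [Fintype 𝓨]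

lemma aux_mul_log_le (a b : ℝ) (ha : 0 ≤ a) (hb : 0 < b) :
    a * (Real.log b - Real.log a) ≤ b - a := by
  rcases ha.eq_or_lt with h | h
  · simp [← h]; positivity
  · have h1 : Real.log b - Real.log a = Real.log (b / a) :=
      (Real.log_div hb.ne' h.ne').symm
    have h2 : Real.log (b / a) ≤ b / a - 1 :=
      Real.log_le_sub_one_of_pos (by positivity)
    have := mul_le_mul_of_nonneg_left h2 ha
    rw [h1]
    calc a * Real.log (b / a) ≤ a * (b / a - 1) := this
    _ = b - a := by field_simp

lemma aux_fano_pt {𝓨 : Type*} [Fintype 𝓨] [Nonempty 𝓨] (q : 𝓨 → ℝ) (hq : ∀ y, 0 ≤ q y) :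
    ∑ y, Real.negMulLog (q y) - Real.negMulLog (∑ y, q y) ≤
      (∑ y, q y) * Real.log 2 +
        ((∑ y, q y) - Finset.univ.sup' Finset.univ_nonempty q) *
          Real.log (Fintype.card 𝓨) := by
  classical
  set s := ∑ y, q y with hs
  set M := Finset.univ.sup' Finset.univ_nonempty q with hM
  have hN : (0:ℝ) < (Fintype.card 𝓨 : ℝ) := by
    exact_mod_cast Fintype.card_pos
  have hs0 : 0 ≤ s := Finset.sum_nonneg fun y _ => hq y
  rcases hs0.eq_or_lt with hz | hspos
  · -- s = 0 : everything vanishes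
    have hq0 : ∀ y, q y = 0 := by
      intro y
      have := (Finset.sum_eq_zero_iff_of_nonneg (fun y _ => hq y)).mp hz.symm
      exact this y (Finset.mem_univ y)
    have hM0 : M = 0 := by
      rw [hM]
      apply le_antisymm
      · exact Finset.sup'_le _ _ fun y _ => (hq0 y).le
      · obtain ⟨y⟩ := (inferInstance : Nonempty 𝓨)
        have := Finset.le_sup' q (Finset.mem_univ y)
        linarith [hq0 y]
    simp [← hz, hM0, hq0, Real.negMulLog]
  · -- s > 0
    obtain ⟨ys, -, hys⟩ := Finset.exists_mem_eq_sup' (Finset.univ_nonempty (α := 𝓨)) q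
    have hrhs : ∑ y, Real.negMulLog (q y) - Real.negMulLog s
        = ∑ y, q y * (Real.log s - Real.log (q y)) := by
      simp only [Real.negMulLog, mul_sub, Finset.sum_sub_distrib, ← Finset.sum_mul,
        neg_mul, Finset.sum_neg_distrib, ← hs]
      ring
    rw [hrhs]
    set N : ℝ := (Fintype.card 𝓨 : ℝ) with hNdef
    set r : 𝓨 → ℝ := fun y => if y = ys then (1:ℝ)/2 else 1/(2*N) with hr
    have hrpos : ∀ y, 0 < r y := by
      intro y; rw [hr]; dsimp only
      split <;> positivity
    have hrsum : ∑ y, r y ≤ 1 := by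
      have : ∑ y, r y = ∑ y, (1/(2*N) + if y = ys then (1:ℝ)/2 - 1/(2*N) else 0) := by
        apply Finset.sum_congr rfl
        intro y _; rw [hr]; dsimp only; split <;> ring
      rw [this, Finset.sum_add_distrib, Finset.sum_ite_eq' Finset.univ ys]
      simp only [Finset.mem_univ, if_true, Finset.sum_const, Finset.card_univ, nsmul_eq_mul]
      rw [← hNdef]
      have : N * (1/(2*N)) = 1/2 := by field_simp
      rw [this]
      have : 0 < 1/(2*N) := by positivity
      linarith
    have hlogr : ∀ y, Real.log s = Real.log (s * r y) - Real.log (r y) := by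
      intro y
      rw [Real.log_mul hspos.ne' (hrpos y).ne']; ring
    have step1 : ∑ y, q y * (Real.log s - Real.log (q y))
        = ∑ y, (q y * (Real.log (s * r y) - Real.log (q y)) + q y * (- Real.log (r y))) := by
      apply Finset.sum_congr rfl
      intro y _
      rw [hlogr y]; ring
    rw [step1, Finset.sum_add_distrib]
    have part1 : ∑ y, q y * (Real.log (s * r y) - Real.log (q y)) ≤ 0 := by
      calc ∑ y, q y * (Real.log (s * r y) - Real.log (q y))
          ≤ ∑ y, (s * r y - q y) :=
            Finset.sum_le_sum fun y _ => aux_mul_log_le _ _ (hq y) (mul_pos hspos (hrpos y))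
      _ = s * (∑ y, r y) - s := by
            rw [Finset.sum_sub_distrib, ← Finset.mul_sum, ← hs]
      _ ≤ 0 := by nlinarith
    have part2 : ∑ y, q y * (- Real.log (r y))
        = s * Real.log 2 + (s - M) * Real.log N := by
      have hlog2N : Real.log (2*N) = Real.log 2 + Real.log N :=
        Real.log_mul two_ne_zero hN.ne'
      have : ∀ y, q y * (- Real.log (r y))
          = q y * (Real.log 2 + Real.log N) - (if y = ys then q y * Real.log N else 0) := by
        intro y; rw [hr]; dsimp only
        split
        · simp [Real.log_div, Real.log_one]; ring
        · rw [show Real.log (1/(2*N)) = -(Real.log 2 + Real.log N) by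
            rw [one_div, Real.log_inv, hlog2N]]
          ring
      rw [Finset.sum_congr rfl (fun y _ => this y), Finset.sum_sub_distrib,
        Finset.sum_ite_eq' Finset.univ ys]
      simp only [Finset.mem_univ, if_true, ← Finset.sum_mul, ← hs]
      rw [hM, hys]
      ring
    rw [part2]
    linarith
lemma aux_cond_pt {𝓨 : Type*} [Fintype 𝓨] [Nonempty 𝓨] (q : 𝓨 → ℝ) (hq : ∀ y, 0 ≤ q y) :
    (∑ y, q y) * (Real.log (∑ y, q y) -
        Real.log (Finset.univ.sup' Finset.univ_nonempty q))
      ≤ ∑ y, Real.negMulLog (q y) - Real.negMulLog (∑ y, q y) := by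
  set s := ∑ y, q y with hs
  set M := Finset.univ.sup' Finset.univ_nonempty q with hM
  have hrhs : ∑ y, Real.negMulLog (q y) - Real.negMulLog s
      = ∑ y, q y * (Real.log s - Real.log (q y)) := by
    simp only [Real.negMulLog, mul_sub, Finset.sum_sub_distrib, ← Finset.sum_mul,
      neg_mul, Finset.sum_neg_distrib, ← hs]
    ring
  rw [hrhs]
  have hterm : ∀ y ∈ Finset.univ, q y * (Real.log s - Real.log M)
      ≤ q y * (Real.log s - Real.log (q y)) := by
    intro y _
    rcases (hq y).eq_or_lt with h | h
    · simp [← h]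
    · have hle : q y ≤ M := Finset.le_sup' q (Finset.mem_univ y)
      have := Real.log_le_log h hle
      nlinarith [hq y]
  calc s * (Real.log s - Real.log M) = ∑ y, q y * (Real.log s - Real.log M) := by
        rw [← Finset.sum_mul]
  _ ≤ _ := Finset.sum_le_sum hterm

lemma aux_termB (a b S : ℝ) (ha : 0 ≤ a) (hb : 0 ≤ b) (hab : 0 < a → 0 < b)
    (hS : 0 < S) :
    a * (-Real.log S) + (a - b / S) ≤ a * (Real.log a - Real.log b) := by
  rcases ha.eq_or_lt with h | h
  · have : 0 ≤ b / S := by positivity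
    simp [← h]; linarith
  · have hbpos := hab h
    have := aux_mul_log_le a (b / S) ha (by positivity)
    rw [Real.log_div hbpos.ne' hS.ne'] at this
    nlinarith

/-- If I(Z;Y|X) > log|𝒴|·(1 - exp(-H(Y|X,Z))) + log 2 - H(Y|X,Z), then the
lower bound of the missing-modality Bayes error strictly exceeds the upper bound of the
full-modality Bayes error; in particular P_e^Miss > P_e. -/
theorem bayesErrorMiss_gt_bayesError [Nonempty 𝓨] (hcard : 2 ≤ Fintype.card 𝓨)
    (p : 𝓧 × 𝓩 × 𝓨 → ℝ) (hp : ∀ a, 0 ≤ p a) (hsum : ∑ a, p a = 1)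
    (hbig : cmi p >
      Real.log (Fintype.card 𝓨) * (1 - Real.exp (-condEntYXZ p))
        + Real.log 2 - condEntYXZ p) :
    (condEntYXZ p + cmi p - Real.log 2) / Real.log (Fintype.card 𝓨) >
        1 - Real.exp (-condEntYXZ p) ∧
      bayesErrorMiss p > bayesError p := by
  classical
  have hN1 : (1:ℝ) < (Fintype.card 𝓨 : ℝ) := by exact_mod_cast hcard
  have hNpos : (0:ℝ) < (Fintype.card 𝓨 : ℝ) := by linarith
  have hNlog : 0 < Real.log (Fintype.card 𝓨) := Real.log_pos hN1
  -- rearranged total-sum facts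
  have hsum3 : ∑ x, ∑ z, ∑ y, p (x, z, y) = 1 := by
    rw [← hsum]; simp [Fintype.sum_prod_type]
  -- abbreviations
  set H := condEntYXZ p with hH
  set Γ := cmi p with hΓ
  set S := ∑ x, ∑ z, Finset.univ.sup' Finset.univ_nonempty (fun y => p (x, z, y)) with hS
  set TM := ∑ x, Finset.univ.sup' Finset.univ_nonempty (fun y => mXY p (x, y)) with hTM
  -- Part 1 : the algebraic consequence of hbig
  have part1 : (H + Γ - Real.log 2) / Real.log (Fintype.card 𝓨) >
      1 - Real.exp (-H) := by
    rw [gt_iff_lt, lt_div_iff₀ hNlog]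
    nlinarith [hbig]
  refine ⟨part1, ?_⟩
  -- nonnegativity of marginals & sup facts
  have hmXZ_nonneg : ∀ x z, (0:ℝ) ≤ ∑ y, p (x, z, y) :=
    fun x z => Finset.sum_nonneg fun y _ => hp _
  have hsup_nonneg : ∀ x z, (0:ℝ) ≤
      Finset.univ.sup' Finset.univ_nonempty (fun y => p (x, z, y)) := by
    intro x z
    obtain ⟨y⟩ := (inferInstance : Nonempty 𝓨)
    exact le_trans (hp _) (Finset.le_sup' (fun y => p (x, z, y)) (Finset.mem_univ y))
  have hm_le_sup : ∀ x z, ∑ y, p (x, z, y) ≤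
      (Fintype.card 𝓨 : ℝ) * Finset.univ.sup' Finset.univ_nonempty (fun y => p (x, z, y)) := by
    intro x z
    calc ∑ y, p (x, z, y)
        ≤ ∑ _y : 𝓨, Finset.univ.sup' Finset.univ_nonempty (fun y => p (x, z, y)) :=
          Finset.sum_le_sum fun y _ => Finset.le_sup' (fun y => p (x, z, y)) (Finset.mem_univ y)
    _ = (Fintype.card 𝓨 : ℝ) * _ := by
          rw [Finset.sum_const, Finset.card_univ, nsmul_eq_mul]
  -- S is positive
  have hSpos : 0 < S := by
    have h1 : (1:ℝ) ≤ (Fintype.card 𝓨 : ℝ) * S := by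
      rw [← hsum3, hS, Finset.mul_sum]
      apply Finset.sum_le_sum; intro x _
      rw [Finset.mul_sum]
      exact Finset.sum_le_sum fun z _ => hm_le_sup x z
    nlinarith
  -- decomposition of H(Y|X,Z)
  have hHdec : H = ∑ x, ∑ z,
      (∑ y, Real.negMulLog (p (x, z, y)) - Real.negMulLog (∑ y, p (x, z, y))) := by
    rw [hH]
    unfold condEntYXZ entropy mXZ
    simp [Fintype.sum_prod_type, Finset.sum_sub_distrib]
  -- lower bound  -log S ≤ H
  have hHlow : -Real.log S ≤ H := by
    rw [hHdec]
    have step1 : ∑ x, ∑ z, ((∑ y, p (x, z, y)) * (Real.log (∑ y, p (x, z, y)) -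
          Real.log (Finset.univ.sup' Finset.univ_nonempty (fun y => p (x, z, y)))))
        ≤ ∑ x, ∑ z,
          (∑ y, Real.negMulLog (p (x, z, y)) - Real.negMulLog (∑ y, p (x, z, y))) := by
      apply Finset.sum_le_sum; intro x _
      apply Finset.sum_le_sum; intro z _
      exact aux_cond_pt (fun y => p (x, z, y)) (fun y => hp _)
    refine le_trans ?_ step1
    have step2 : ∀ x z, (∑ y, p (x, z, y)) * (-Real.log S) +
        ((∑ y, p (x, z, y)) -
          Finset.univ.sup' Finset.univ_nonempty (fun y => p (x, z, y)) / S)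
        ≤ (∑ y, p (x, z, y)) * (Real.log (∑ y, p (x, z, y)) -
            Real.log (Finset.univ.sup' Finset.univ_nonempty (fun y => p (x, z, y)))) := by
      intro x z
      apply aux_termB _ _ _ (hmXZ_nonneg x z) (hsup_nonneg x z) _ hSpos
      intro hpos
      have := hm_le_sup x z
      nlinarith
    calc -Real.log S
        = ∑ x, ∑ z, ((∑ y, p (x, z, y)) * (-Real.log S) +
            ((∑ y, p (x, z, y)) -
              Finset.univ.sup' Finset.univ_nonempty (fun y => p (x, z, y)) / S)) := by
          simp only [Finset.sum_add_distrib, Finset.sum_sub_distrib, ← Finset.sum_mul,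
            ← Finset.sum_div, hsum3, ← hS]
          field_simp
          ring
    _ ≤ _ := Finset.sum_le_sum fun x _ => Finset.sum_le_sum fun z _ => step2 x z
  -- upper bound for bayesError
  have hBE : bayesError p ≤ 1 - Real.exp (-H) := by
    have : Real.exp (-H) ≤ S := by
      calc Real.exp (-H) ≤ Real.exp (Real.log S) := Real.exp_le_exp.mpr (by linarith)
      _ = S := Real.exp_log hSpos
    rw [bayesError, ← hS]
    linarith
  -- Fano: H(Y|X) ≤ log 2 + (1 - TM) log N
  have hmXY_nonneg : ∀ x y, (0:ℝ) ≤ mXY p (x, y) :=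
    fun x y => Finset.sum_nonneg fun z _ => hp _
  have hmX_eq : ∀ x, mX p x = ∑ y, mXY p (x, y) := by
    intro x; simp only [mX, mXY]; exact Finset.sum_comm
  have hsumX : ∑ x, ∑ y, mXY p (x, y) = 1 := by
    rw [← hsum3]
    exact Finset.sum_congr rfl fun x _ => Finset.sum_comm
  have hCYXdec : condEntYX p = ∑ x,
      (∑ y, Real.negMulLog (mXY p (x, y)) - Real.negMulLog (∑ y, mXY p (x, y))) := by
    unfold condEntYX entropy
    simp only [Fintype.sum_prod_type, Finset.sum_sub_distrib]
    congr 1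
    apply Finset.sum_congr rfl
    intro x _
    rw [hmX_eq x]
  have hfano : condEntYX p ≤ Real.log 2 + (1 - TM) * Real.log (Fintype.card 𝓨) := by
    rw [hCYXdec]
    calc ∑ x, (∑ y, Real.negMulLog (mXY p (x, y)) - Real.negMulLog (∑ y, mXY p (x, y)))
        ≤ ∑ x, ((∑ y, mXY p (x, y)) * Real.log 2 +
            ((∑ y, mXY p (x, y)) -
              Finset.univ.sup' Finset.univ_nonempty (fun y => mXY p (x, y))) *
              Real.log (Fintype.card 𝓨)) :=
          Finset.sum_le_sum fun x _ => aux_fano_pt (fun y => mXY p (x, y))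
            (fun y => hmXY_nonneg x y)
    _ = Real.log 2 + (1 - TM) * Real.log (Fintype.card 𝓨) := by
          simp only [Finset.sum_add_distrib, ← Finset.sum_mul, Finset.sum_sub_distrib,
            hsumX, ← hTM]
          ring
  -- identity H(Y|X) = H + Γ
  have hid : condEntYX p = H + Γ := by
    rw [hH, hΓ]; unfold cmi miYXZ miYX condEntYXZ condEntYX; ring
  -- missing-modality lower bound
  have hBEM : (H + Γ - Real.log 2) / Real.log (Fintype.card 𝓨) ≤ bayesErrorMiss p := by
    rw [bayesErrorMiss, ← hTM, div_le_iff₀ hNlog]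
    rw [hid] at hfano
    nlinarith
  have := part1
  rw [bayesErrorMiss, ← hTM] at hBEM ⊢
  rw [gt_iff_lt]
  calc bayesError p ≤ 1 - Real.exp (-H) := hBE
  _ < (H + Γ - Real.log 2) / Real.log (Fintype.card 𝓨) := part1
  _ ≤ 1 - TM := hBEM
end

section
/- For any probability distribution p on a finite set of size n ≥ 2 with p_err := 1 - max_i p_i, we have H(p) ≤ h(p_err) + p_err · log(n-1) ≤ log 2 + p_err · log n, where h(t) = -t log t - (1-t) log(1-t). -/
open Finset

/-- Binary entropy function h(t) = -t log t - (1-t) log(1-t). -/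
noncomputable def binEnt (t : ℝ) : ℝ := Real.negMulLog t + Real.negMulLog (1 - t)

lemma binEnt_eq (t : ℝ) : binEnt t = Real.binEntropy t := by
  simp [binEnt, Real.binEntropy, Real.negMulLog, Real.log_inv]; ring

/-- Fano's inequality: for p on a finite set of size n ≥ 2 with
p_err := 1 - max_i p_i, H(p) ≤ h(p_err) + p_err·log(n-1) ≤ log 2 + p_err·log n. -/
theorem fano_inequality {ι : Type*} [Fintype ι] [Nonempty ι]
    (hcard : 2 ≤ Fintype.card ι)
    (p : ι → ℝ) (hp : ∀ i, 0 ≤ p i) (hsum : ∑ i, p i = 1) :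
    entropy p ≤ binEnt (1 - Finset.univ.sup' Finset.univ_nonempty p) +
        (1 - Finset.univ.sup' Finset.univ_nonempty p) * Real.log (Fintype.card ι - 1) ∧
      binEnt (1 - Finset.univ.sup' Finset.univ_nonempty p) +
          (1 - Finset.univ.sup' Finset.univ_nonempty p) * Real.log (Fintype.card ι - 1) ≤
        Real.log 2 +
          (1 - Finset.univ.sup' Finset.univ_nonempty p) * Real.log (Fintype.card ι) := by
  classical
  set M := Finset.univ.sup' Finset.univ_nonempty p with hM
  obtain ⟨i₀, -, hi₀⟩ := Finset.exists_mem_eq_sup' Finset.univ_nonempty p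
  have hMi : M = p i₀ := by rw [hM, hi₀]
  set e := 1 - M with he
  set t : Finset ι := Finset.univ.erase i₀ with ht
  have htcard : t.card = Fintype.card ι - 1 := by
    simp [ht, Finset.card_erase_of_mem, Finset.card_univ]
  have hm1 : 1 ≤ t.card := by omega
  have hmR : (1 : ℝ) ≤ (t.card : ℝ) := by exact_mod_cast hm1
  have hmpos : (0 : ℝ) < (t.card : ℝ) := by linarith
  have hcast : ((Fintype.card ι : ℝ) - 1) = (t.card : ℝ) := by
    rw [htcard]; push_cast [Nat.cast_sub (by omega : 1 ≤ Fintype.card ι)]; ring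
  have hsume : ∑ i ∈ t, p i = e := by
    have := Finset.add_sum_erase Finset.univ p (Finset.mem_univ i₀)
    rw [hsum] at this
    simp only [he, hMi, ht]
    linarith
  have hMle1 : M ≤ 1 := by
    rw [hMi, ← hsum]
    exact Finset.single_le_sum (fun i _ => hp i) (Finset.mem_univ i₀)
  have hepos : 0 ≤ e := by linarith
  -- Jensen
  have jensen : ∑ i ∈ t, (t.card : ℝ)⁻¹ • Real.negMulLog (p i) ≤
      Real.negMulLog (∑ i ∈ t, (t.card : ℝ)⁻¹ • p i) := by
    apply Real.concaveOn_negMulLog.le_map_sum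
    · intro i _; positivity
    · rw [Finset.sum_const, nsmul_eq_mul]; field_simp
    · intro i _; exact hp i
  have hsmul : (∑ i ∈ t, (t.card : ℝ)⁻¹ • p i) = e / t.card := by
    rw [← Finset.smul_sum, hsume, smul_eq_mul]; ring
  have key : ∑ i ∈ t, Real.negMulLog (p i) ≤ Real.negMulLog e + e * Real.log (t.card : ℝ) := by
    have h1 : ∑ i ∈ t, Real.negMulLog (p i) ≤ (t.card : ℝ) * Real.negMulLog (e / t.card) := by
      rw [hsmul] at jensen
      have := mul_le_mul_of_nonneg_left jensen hmpos.le
      rw [Finset.mul_sum] at this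
      calc ∑ i ∈ t, Real.negMulLog (p i)
          = ∑ i ∈ t, (t.card : ℝ) * ((t.card : ℝ)⁻¹ • Real.negMulLog (p i)) := by
            apply Finset.sum_congr rfl; intro i _; rw [smul_eq_mul]; field_simp
        _ ≤ _ := this
    refine h1.trans_eq ?_
    rcases eq_or_lt_of_le hepos with h0 | h0
    · simp [← h0, Real.negMulLog]
    · rw [Real.negMulLog, Real.negMulLog, Real.log_div (ne_of_gt h0) (ne_of_gt hmpos)]
      field_simp
      ring
  constructor
  · have hent : entropy p = Real.negMulLog M + ∑ i ∈ t, Real.negMulLog (p i) := by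
      rw [entropy, hMi, ht, Finset.add_sum_erase Finset.univ (fun i => Real.negMulLog (p i)) (Finset.mem_univ i₀)]
    have h1me : 1 - e = M := by rw [he]; ring
    rw [hent, binEnt, h1me, hcast]
    linarith
  · have h2 : binEnt e ≤ Real.log 2 := by rw [binEnt_eq]; exact Real.binEntropy_le_log_two
    have h3 : e * Real.log ((Fintype.card ι : ℝ) - 1) ≤ e * Real.log (Fintype.card ι) := by
      apply mul_le_mul_of_nonneg_left _ hepos
      apply Real.log_le_log (by rw [hcast]; linarith)
      linarith
    linarith
end
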